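/- Let G be a group, c ∈ G, m ≥ 1 and q ≥ 1 integers. Let φ be the map on tuples (w₀; w₁, …, w_m) ∈ G^{m+1} with w₀w₁⋯w_m = c given by φ(w₀; w₁, …, w_m) = ((c w_m c⁻¹) w₀ (c w_m c⁻¹)⁻¹; c w_m c⁻¹, w₁, …, w_{m-1}). Then a tuple (w₀; w₁, …, w_m) is fixed by φ^{qm} if and only if every component w_i (0 ≤ i ≤ m) commutes with c^q. -/

import Mathlib

def phi {G : Type*} [Group G] (c : G) (m : ℕ) (w : Fin (m + 1) → G) :
    Fin (m + 1) → G := fun i =>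
  if i = 0 then (c * w (Fin.last m) * c⁻¹) * w 0 * (c * w (Fin.last m) * c⁻¹)⁻¹
  else if i = 1 then c * w (Fin.last m) * c⁻¹
  else w (i - 1)

/-!
On the positions `1, …, m` the map `φ` is a cyclic shift which conjugates by `c` the entry
wrapping around, so after `m` steps each `wᵢ` with `i ≠ 0` has become `c wᵢ c⁻¹`. Moreover `φ`
preserves the product `w₀ w₁ ⋯ w_m = c`, which determines `w₀` from the other entries; hence
`φ^m` is conjugation by `c` on every entry, and `φ^{qm}` is conjugation by `c^q`.
-/

open Fin.NatCast

lemma prod_ofFn_conj {G : Type*} [Group G] (g : G) {m : ℕ} (w : Fin m → G) :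
    (List.ofFn (MulAut.conj g ∘ w)).prod = MulAut.conj g (List.ofFn w).prod := by
  rw [map_list_prod, List.map_ofFn]

lemma eq_of_prod_ofFn_eq {M : Type*} [CancelMonoid M] {m : ℕ} {v w : Fin (m + 1) → M}
    (hprod : (List.ofFn v).prod = (List.ofFn w).prod) (htail : ∀ i, i ≠ 0 → v i = w i) :
    v = w := by
  have hsucc : (fun i : Fin m => v i.succ) = fun i => w i.succ :=
    funext fun i => htail _ i.succ_ne_zero
  rw [List.ofFn_succ, List.ofFn_succ, hsucc, List.prod_cons, List.prod_cons,
    mul_left_inj] at hprod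
  funext i
  cases i using Fin.cases with
  | zero => exact hprod
  | succ i => exact htail _ i.succ_ne_zero

section
variable {G : Type*} [Group G] (c : G) {m : ℕ}

lemma phi_apply_zero (w : Fin (m + 1) → G) :
    phi c m w 0 = (c * w (Fin.last m) * c⁻¹) * w 0 * (c * w (Fin.last m) * c⁻¹)⁻¹ :=
  if_pos rfl

lemma phi_apply_one (hm : 1 ≤ m) (w : Fin (m + 1) → G) :
    phi c m w 1 = c * w (Fin.last m) * c⁻¹ := by
  have : (1 : Fin (m + 1)) ≠ 0 := by simp [Fin.ext_iff]; omega
  simp [phi, this]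

lemma phi_apply_of_ne (w : Fin (m + 1) → G) {i : Fin (m + 1)} (h0 : i ≠ 0) (h1 : i ≠ 1) :
    phi c m w i = w (i - 1) := by
  simp [phi, h0, h1]

/-- Indices live in `Fin (m + 1)`, so for `i ≤ k` the index `i - (k + 1)` is `m + i - k`. -/
lemma phi_iterate_apply_of_ne_zero (w : Fin (m + 1) → G) {k : ℕ} (hk : k ≤ m)
    {i : Fin (m + 1)} (hi : i ≠ 0) :
    (phi c m)^[k] w i = if k < (i : ℕ) then w (i - k) else c * w (i - (k + 1)) * c⁻¹ := by
  induction k generalizing i with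
  | zero => simp [Fin.pos_iff_ne_zero.mpr hi]
  | succ k ih =>
    rw [Function.iterate_succ_apply']
    by_cases h1 : i = 1
    · subst h1
      have hlast : Fin.last m ≠ 0 := by simp [Fin.ext_iff]; omega
      have hv1 : ((1 : Fin (m + 1)) : ℕ) = 1 := by simp; omega
      rw [phi_apply_one c (by omega), ih (by omega) hlast, if_pos (by rw [Fin.val_last]; omega),
        if_neg (by rw [hv1]; omega), eq_neg_of_add_eq_zero_left (Fin.last_add_one m)]
      push_cast
      abel_nf
    · rw [phi_apply_of_ne c _ hi h1, ih (by omega) (sub_ne_zero.mpr h1), Fin.coe_sub_one,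
        if_neg hi, Nat.cast_succ, sub_sub, sub_sub, add_comm 1, add_comm 1]
      exact if_congr (by omega) rfl rfl

lemma prod_ofFn_phi (hm : 1 ≤ m) (w : Fin (m + 1) → G) :
    (List.ofFn (phi c m w)).prod
      = c * w (Fin.last m) * c⁻¹ * (List.ofFn w).prod * (w (Fin.last m))⁻¹ := by
  obtain ⟨n, rfl⟩ := Nat.exists_eq_add_of_le' hm
  have hphi (j : Fin n) : phi c (n + 1) w j.succ.succ = w j.castSucc.succ := by
    rw [phi_apply_of_ne c w (Fin.succ_ne_zero _) (by simp [Fin.ext_iff])]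
    congr 1
    ext
    simp [Fin.coe_sub_one]
  have hw : (List.ofFn w).prod
      = w 0 * (List.ofFn fun j : Fin n => w j.castSucc.succ).prod * w (Fin.last (n + 1)) := by
    rw [List.ofFn_succ, List.ofFn_succ']
    simp [mul_assoc]
  rw [hw, List.ofFn_succ, List.ofFn_succ]
  simp only [List.prod_cons, phi_apply_zero, Fin.succ_zero_eq_one, phi_apply_one c hm, hphi]
  group

lemma prod_ofFn_phi_iterate (hm : 1 ≤ m) {w : Fin (m + 1) → G} (hw : (List.ofFn w).prod = c)
    (k : ℕ) : (List.ofFn ((phi c m)^[k] w)).prod = c := by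
  induction k with
  | zero => exact hw
  | succ k ih =>
    rw [Function.iterate_succ_apply', prod_ofFn_phi c hm, ih]
    group

variable {c}

lemma phi_iterate_self_eq_conj (hm : 1 ≤ m) {w : Fin (m + 1) → G}
    (hw : (List.ofFn w).prod = c) : (phi c m)^[m] w = MulAut.conj c ∘ w := by
  refine eq_of_prod_ofFn_eq ?_ fun i hi => ?_
  · rw [prod_ofFn_phi_iterate c hm hw, prod_ofFn_conj, hw, MulAut.conj_apply,
      mul_inv_cancel_right]
  · rw [phi_iterate_apply_of_ne_zero c w le_rfl hi, if_neg (by omega), ← Nat.cast_succ,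
      Fin.natCast_self, sub_zero, Function.comp_apply, MulAut.conj_apply]

lemma phi_iterate_mul_eq_conj_pow (hm : 1 ≤ m) {w : Fin (m + 1) → G}
    (hw : (List.ofFn w).prod = c) (n : ℕ) :
    (phi c m)^[n * m] w = MulAut.conj (c ^ n) ∘ w := by
  induction n with
  | zero => simp
  | succ n ih =>
    have hprod : (List.ofFn (MulAut.conj (c ^ n) ∘ w)).prod = c := by
      rw [prod_ofFn_conj, hw, MulAut.conj_apply, (Commute.pow_self c n).eq, mul_inv_cancel_right]
    rw [add_one_mul, add_comm (n * m), Function.iterate_add_apply, ih,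
      phi_iterate_self_eq_conj hm hprod, pow_succ', map_mul]
    rfl

end

theorem stmt_9_general {G : Type*} [Group G] (c : G) (m q : ℕ) (hm : 1 ≤ m)
    (w : Fin (m + 1) → G) (hw : (List.ofFn w).prod = c) :
    (phi c m)^[q * m] w = w ↔ ∀ i : Fin (m + 1), Commute (w i) (c ^ q) := by
  rw [phi_iterate_mul_eq_conj_pow hm hw q, funext_iff]
  refine forall_congr' fun i => ?_
  rw [Function.comp_apply, MulAut.conj_apply, mul_inv_eq_iff_eq_mul, Commute.symm_iff]
  rfl

theorem stmt_9 {G : Type*} [Group G] (c : G) (m q : ℕ) (hm : 1 ≤ m) (hq : 1 ≤ q)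
    (w : Fin (m + 1) → G) (hw : (List.ofFn w).prod = c) :
    (phi c m)^[q * m] w = w ↔ ∀ i : Fin (m + 1), Commute (w i) (c ^ q) :=
  stmt_9_general c m q hm w hw
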